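/- arXiv:1710.02042 — 2 statements merged into one kernel-verified Lean document; each statement's English description precedes it below -/
import Mathlib

section
/- (Hall's theorem on sums of Cantor sets) Fix ε > 0. Let 𝕂 and 𝔽 be Cantor sets in ℝ, each satisfying the ε-stable gap condition, and assume the pair (𝕂,𝔽) satisfies the ε-size condition. Then the sumset 𝕂 + 𝔽 := { x + y : x ∈ 𝕂, y ∈ 𝔽 } equals the whole interval [min 𝕂 + min 𝔽, max 𝕂 + max 𝔽]. -/
noncomputable section

/-- A Cantor set in `ℝ`: a nonempty compact, perfect, totally disconnected subset. -/
def IsCantorSet (C : Set ℝ) : Prop :=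
  C.Nonempty ∧ IsCompact C ∧ Perfect C ∧ IsTotallyDisconnected C

/-- A slow subdivision of a set `C ⊆ ℝ`: a decreasing family of closed sets `level n`,
each the union of `n+1` disjoint compact intervals, starting from
`level 0 = [min C, max C]`, where `level (n+1)` is obtained from `level n` by removing
exactly one nonempty open interval `(e n, f n)` from the connected component
`[a n, b n]` of `level n`, leaving the two disjoint nonempty closed intervals
`[a n, e n]` and `[f n, b n]`; the total intersection is `C`. -/
structure SlowSubdivision (C : Set ℝ) where
  level : ℕ → Set ℝ
  subset_succ : ∀ n, level (n + 1) ⊆ level n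
  level_zero : level 0 = Set.Icc (sInf C) (sSup C)
  pieces : ∀ n, ∃ I : Fin (n + 1) → ℝ × ℝ,
    (∀ i, (I i).1 ≤ (I i).2) ∧
    (∀ i j, i ≠ j → Disjoint (Set.Icc (I i).1 (I i).2) (Set.Icc (I j).1 (I j).2)) ∧
    level n = ⋃ i, Set.Icc (I i).1 (I i).2
  a : ℕ → ℝ
  e : ℕ → ℝ
  f : ℕ → ℝ
  b : ℕ → ℝ
  a_le_e : ∀ n, a n ≤ e n
  e_lt_f : ∀ n, e n < f n
  f_le_b : ∀ n, f n ≤ b n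
  component : ∀ n, connectedComponentIn (level n) (a n) = Set.Icc (a n) (b n)
  level_succ : ∀ n, level (n + 1) = level n \ Set.Ioo (e n) (f n)
  iInter_level : ⋂ n, level n = C

/-- The `ε`-stable gap condition for a slow subdivision: at every stage, the removed
hole `B = (e n, f n)` and the adjacent intervals `K^L = [a n, e n]`, `K^R = [f n, b n]`
satisfy `|B| < (1−ε)|K^L|` and `|B| < (1−ε)|K^R|`. -/
def StableGapCond (ε : ℝ) {C : Set ℝ} (s : SlowSubdivision C) : Prop :=
  ∀ n, s.f n - s.e n < (1 - ε) * (s.e n - s.a n) ∧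
    s.f n - s.e n < (1 - ε) * (s.b n - s.f n)

/-- A Cantor set satisfies the `ε`-stable gap condition if it admits a slow subdivision
satisfying it. -/
def HasStableGap (ε : ℝ) (C : Set ℝ) : Prop :=
  ∃ s : SlowSubdivision C, StableGapCond ε s

/-- `B` is a hole of `C`: a (bounded) connected component of the complement of `C`
contained in `[min C, max C]`. -/
def IsHole (C B : Set ℝ) : Prop :=
  (∃ x ∈ B, connectedComponentIn Cᶜ x = B) ∧ B ⊆ Set.Icc (sInf C) (sSup C)

/-- The pair `(K, F)` satisfies the `ε`-size condition: every hole of each set has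
length at most `(1−ε)` times the length of the other set. -/
def SizeCond (ε : ℝ) (K F : Set ℝ) : Prop :=
  (∀ B, IsHole K B → sSup B - sInf B ≤ (1 - ε) * (sSup F - sInf F)) ∧
  (∀ B, IsHole F B → sSup B - sInf B ≤ (1 - ε) * (sSup K - sInf K))


/-!
For `t` in the interval, `t ∈ 𝕂(n) + 𝔽(n)` for every `n`, and the levels are nested compact sets,
so `t ∈ 𝕂 + 𝔽`. Passing from `𝔽(n)` to `𝔽(n+1)` removes a hole `B` from a component `K` of `𝔽(n)`.
If this destroyed every representation `t = x + y`, then `𝕂(n)` would meet the window `t - B`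
while missing both flanks `t - K^L` and `t - K^R`, each longer than `|B| / (1 - ε)`, and
`|B| ≤ (1 - ε) |𝕂|` by the size condition. Newhouse's gap lemma for the stable gap condition
of `𝕂` rules this out; removing a hole of `𝕂` is symmetric.
-/

open Set Pointwise

theorem exists_lt_not_and_succ {p : ℕ → Prop} {N : ℕ} (h0 : ¬p 0) (hN : p N) :
    ∃ n < N, ¬p n ∧ p (n + 1) := by
  induction N with
  | zero => exact absurd hN h0
  | succ N ih =>
    by_cases h : p N
    · obtain ⟨n, hn, hpn⟩ := ih h
      exact ⟨n, hn.trans N.lt_succ_self, hpn⟩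
    · exact ⟨N, N.lt_succ_self, h, hN⟩

theorem interior_inter_connectedComponentIn_subset {X : Type*} [TopologicalSpace X]
    [LocallyConnectedSpace X] (F : Set X) (x : X) :
    interior F ∩ connectedComponentIn F x ⊆ interior (connectedComponentIn F x) := by
  rintro y ⟨hyF, hyx⟩
  rw [connectedComponentIn_eq hyx]
  exact interior_maximal (connectedComponentIn_mono y interior_subset)
    isOpen_interior.connectedComponentIn (mem_connectedComponentIn hyF)

theorem connectedComponentIn_subset_Ioo {F : Set ℝ} {β γ x : ℝ} (hβ : β ∉ F) (hγ : γ ∉ F)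
    (hx : x ∈ Ioo β γ) : connectedComponentIn F x ⊆ Ioo β γ := by
  have hord := (isPreconnected_connectedComponentIn (F := F) (x := x)).ordConnected
  by_cases hxF : x ∈ F
  · have hxc := mem_connectedComponentIn hxF
    refine fun y hy => ⟨?_, ?_⟩
    · by_contra! hyβ
      exact hβ (connectedComponentIn_subset _ _ (hord.out hy hxc ⟨hyβ, hx.1.le⟩))
    · by_contra! hγy
      exact hγ (connectedComponentIn_subset _ _ (hord.out hxc hy ⟨hx.2.le, hγy⟩))
  · simp [connectedComponentIn_eq_empty hxF]

theorem connectedComponentIn_compl_eq_Ioo {C : Set ℝ} {e f x : ℝ} (he : e ∈ C) (hf : f ∈ C)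
    (hgap : Disjoint (Ioo e f) C) (hx : x ∈ Ioo e f) :
    connectedComponentIn Cᶜ x = Ioo e f :=
  (connectedComponentIn_subset_Ioo (not_not_intro he) (not_not_intro hf) hx).antisymm
    (isPreconnected_Ioo.subset_connectedComponentIn hx hgap.subset_compl_right)

theorem iInter_add_subset_add_iInter {G : Type*} [AddGroup G] [TopologicalSpace G]
    [IsTopologicalAddGroup G] {A B : ℕ → Set G} (hA : Antitone A) (hB : Antitone B)
    (hA0 : IsCompact (A 0)) (hAc : ∀ n, IsClosed (A n)) (hBc : ∀ n, IsClosed (B n)) :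
    ⋂ n, (A n + B n) ⊆ (⋂ n, A n) + ⋂ n, B n := by
  intro t ht
  rw [mem_iInter] at ht
  set T : ℕ → Set G := fun n => A n ∩ (fun x => -x + t) ⁻¹' B n
  have hT : ∀ n, (T n).Nonempty := fun n => by
    obtain ⟨x, hx, y, hy, rfl⟩ := ht n
    exact ⟨x, hx, show -x + (x + y) ∈ B n by rwa [neg_add_cancel_left]⟩
  obtain ⟨x, hx⟩ := IsCompact.nonempty_iInter_of_sequence_nonempty_isCompact_isClosed T
    (fun n => inter_subset_inter (hA n.le_succ) (preimage_mono (hB n.le_succ))) hT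
    (hA0.inter_right ((hBc 0).preimage (by fun_prop)))
    (fun n => (hAc n).inter ((hBc n).preimage (by fun_prop)))
  simp only [T, mem_iInter, mem_inter_iff, mem_preimage] at hx
  exact ⟨x, mem_iInter.2 fun n => (hx n).1, -x + t, mem_iInter.2 fun n => (hx n).2,
    add_neg_cancel_left x t⟩

namespace SlowSubdivision

variable {C : Set ℝ} (s : SlowSubdivision C)

theorem a_le_b (n : ℕ) : s.a n ≤ s.b n :=
  (s.a_le_e n).trans ((s.e_lt_f n).le.trans (s.f_le_b n))

theorem antitone_level : Antitone s.level :=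
  antitone_nat_of_succ_le s.subset_succ

theorem Icc_subset_level (n : ℕ) : Icc (s.a n) (s.b n) ⊆ s.level n := by
  rw [← s.component n]
  exact connectedComponentIn_subset _ _

theorem Ioo_subset_Icc (n : ℕ) : Ioo (s.e n) (s.f n) ⊆ Icc (s.a n) (s.b n) :=
  Ioo_subset_Icc_self.trans (Icc_subset_Icc (s.a_le_e n) (s.f_le_b n))

theorem Icc_left_subset_level_succ (n : ℕ) : Icc (s.a n) (s.e n) ⊆ s.level (n + 1) := by
  rw [s.level_succ]
  exact fun x hx => ⟨s.Icc_subset_level n ⟨hx.1, hx.2.trans (s.e_lt_f n).le |>.trans (s.f_le_b n)⟩,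
    fun h => (h.1.trans_le hx.2).false⟩

theorem Icc_right_subset_level_succ (n : ℕ) : Icc (s.f n) (s.b n) ⊆ s.level (n + 1) := by
  rw [s.level_succ]
  exact fun x hx => ⟨s.Icc_subset_level n ⟨(s.a_le_e n).trans (s.e_lt_f n).le |>.trans hx.1, hx.2⟩,
    fun h => (hx.1.trans_lt h.2).false⟩

theorem disjoint_Ioo_level_succ (n : ℕ) : Disjoint (Ioo (s.e n) (s.f n)) (s.level (n + 1)) := by
  rw [s.level_succ]
  exact disjoint_sdiff_right

theorem sInf_le_sSup (s : SlowSubdivision C) : sInf C ≤ sSup C := by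
  have := s.Icc_subset_level 0 ⟨le_rfl, s.a_le_b 0⟩
  rw [s.level_zero] at this
  exact this.1.trans this.2

theorem subset_level (n : ℕ) : C ⊆ s.level n :=
  s.iInter_level.ge.trans (iInter_subset _ n)

theorem isClosed_level (n : ℕ) : IsClosed (s.level n) := by
  induction n with
  | zero => rw [s.level_zero]; exact isClosed_Icc
  | succ n ih => rw [s.level_succ]; exact ih.sdiff isOpen_Ioo

theorem isCompact_level_zero : IsCompact (s.level 0) := by
  rw [s.level_zero]
  exact isCompact_Icc

theorem exists_mem_Ioo_of_mem_level {x : ℝ} {m N : ℕ} (hx : x ∈ s.level m) (hxN : x ∉ s.level N) :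
    ∃ k, m ≤ k ∧ k < N ∧ x ∈ Ioo (s.e k) (s.f k) := by
  induction N with
  | zero => exact absurd (s.antitone_level m.zero_le hx) hxN
  | succ N ih =>
    by_cases hxN' : x ∈ s.level N
    · have hmN : m ≤ N := by
        by_contra! h
        exact hxN (s.antitone_level h hx)
      rw [s.level_succ] at hxN
      exact ⟨N, hmN, N.lt_succ_self, by simpa [hxN'] using hxN⟩
    · obtain ⟨k, hmk, hkN, hxk⟩ := ih hxN'
      exact ⟨k, hmk, hkN.trans N.lt_succ_self, hxk⟩

/-- Holes removed at stages `k ≥ n` lie in the interior of `level n`. -/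
theorem mem_level_of_notMem_interior {x : ℝ} {n : ℕ} (hx : x ∈ s.level n)
    (hint : x ∉ interior (s.level n)) (k : ℕ) : x ∈ s.level k := by
  by_contra hxk
  obtain ⟨j, hnj, -, hxj⟩ := s.exists_mem_Ioo_of_mem_level hx hxk
  exact hint (interior_maximal ((s.Ioo_subset_Icc j).trans
    ((s.Icc_subset_level j).trans (s.antitone_level hnj))) isOpen_Ioo hxj)

theorem a_mem_level (n k : ℕ) : s.a n ∈ s.level k := by
  refine s.mem_level_of_notMem_interior (s.Icc_subset_level n ⟨le_rfl, s.a_le_b n⟩)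
    (fun h => ?_) k
  have := interior_inter_connectedComponentIn_subset _ _
    ⟨h, mem_connectedComponentIn (s.Icc_subset_level n ⟨le_rfl, s.a_le_b n⟩)⟩
  rw [s.component, interior_Icc] at this
  exact this.1.false

theorem connectedComponentIn_level_b (n : ℕ) :
    connectedComponentIn (s.level n) (s.b n) = Icc (s.a n) (s.b n) := by
  rw [← connectedComponentIn_eq (by rw [s.component]; exact ⟨s.a_le_b n, le_rfl⟩), s.component]

theorem b_mem_level (n k : ℕ) : s.b n ∈ s.level k := by
  refine s.mem_level_of_notMem_interior (s.Icc_subset_level n ⟨s.a_le_b n, le_rfl⟩)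
    (fun h => ?_) k
  have := interior_inter_connectedComponentIn_subset _ _
    ⟨h, mem_connectedComponentIn (s.Icc_subset_level n ⟨s.a_le_b n, le_rfl⟩)⟩
  rw [s.connectedComponentIn_level_b, interior_Icc] at this
  exact this.2.false

theorem disjoint_interior_level_succ (n : ℕ) :
    Disjoint (interior (s.level (n + 1))) (Icc (s.e n) (s.f n)) := by
  rw [← closure_Ioo (s.e_lt_f n).ne]
  exact ((s.disjoint_Ioo_level_succ n).symm.mono_left interior_subset).closure_right
    isOpen_interior

theorem e_mem_level (n k : ℕ) : s.e n ∈ s.level k :=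
  s.mem_level_of_notMem_interior (s.Icc_left_subset_level_succ n ⟨s.a_le_e n, le_rfl⟩)
    (fun h => (s.disjoint_interior_level_succ n).ne_of_mem h ⟨le_rfl, (s.e_lt_f n).le⟩ rfl) k

theorem f_mem_level (n k : ℕ) : s.f n ∈ s.level k :=
  s.mem_level_of_notMem_interior (s.Icc_right_subset_level_succ n ⟨le_rfl, s.f_le_b n⟩)
    (fun h => (s.disjoint_interior_level_succ n).ne_of_mem h ⟨(s.e_lt_f n).le, le_rfl⟩ rfl) k

theorem mem_of_forall_mem_level {x : ℝ} (hx : ∀ k, x ∈ s.level k) : x ∈ C :=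
  s.iInter_level.le (mem_iInter.2 hx)

theorem isHole_Ioo (n : ℕ) : IsHole C (Ioo (s.e n) (s.f n)) := by
  have hmid : (s.e n + s.f n) / 2 ∈ Ioo (s.e n) (s.f n) := by
    constructor <;> linarith [s.e_lt_f n]
  refine ⟨⟨_, hmid, connectedComponentIn_compl_eq_Ioo (s.mem_of_forall_mem_level (s.e_mem_level n))
    (s.mem_of_forall_mem_level (s.f_mem_level n))
    ((s.disjoint_Ioo_level_succ n).mono_right (s.subset_level _)) hmid⟩, ?_⟩
  rw [← s.level_zero]
  exact (s.Ioo_subset_Icc n).trans ((s.Icc_subset_level n).trans (s.antitone_level n.zero_le))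

def neg : SlowSubdivision (-C) where
  level n := -s.level n
  subset_succ n := neg_subset_neg.2 (s.subset_succ n)
  level_zero := by rw [s.level_zero, neg_Icc, Real.sInf_neg, Real.sSup_neg]
  pieces n := by
    obtain ⟨I, hle, hdisj, hunion⟩ := s.pieces n
    refine ⟨fun i => (-(I i).2, -(I i).1), fun i => neg_le_neg (hle i), fun i j hij => ?_, ?_⟩
    · rw [← neg_Icc, ← neg_Icc]
      exact (hdisj i j hij).preimage Neg.neg
    · simp only [hunion, iUnion_neg, neg_Icc]
  a n := -s.b n
  e n := -s.f n
  f n := -s.e n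
  b n := -s.a n
  a_le_e n := neg_le_neg (s.f_le_b n)
  e_lt_f n := neg_lt_neg (s.e_lt_f n)
  f_le_b n := neg_le_neg (s.a_le_e n)
  component n := by
    have := (Homeomorph.neg ℝ).image_connectedComponentIn
      (s.Icc_subset_level n ⟨s.a_le_b n, le_rfl⟩)
    simp only [Homeomorph.coe_neg, image_neg_eq_neg] at this
    rw [← this, s.connectedComponentIn_level_b, neg_Icc]
  level_succ n := by
    rw [s.level_succ, ← neg_Ioo]
    rfl
  iInter_level := by rw [← iInter_neg, s.iInter_level]

theorem connectedComponentIn_level_eq_Icc {x : ℝ} {m : ℕ}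
    (hsplit : ¬connectedComponentIn (s.level m) x ⊆ s.level (m + 1)) :
    connectedComponentIn (s.level m) x = Icc (s.a m) (s.b m) := by
  obtain ⟨w, hw, hw'⟩ := not_subset.1 hsplit
  have hwgap : w ∈ Ioo (s.e m) (s.f m) := by
    rw [s.level_succ] at hw'
    by_contra h
    exact hw' ⟨connectedComponentIn_subset _ _ hw, h⟩
  have hwa : w ∈ connectedComponentIn (s.level m) (s.a m) := by
    rw [s.component]
    exact s.Ioo_subset_Icc m hwgap
  rw [connectedComponentIn_eq hw, ← s.component, connectedComponentIn_eq hwa]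

theorem split_cases_of_component_subset_Ioo {x β γ : ℝ} {m : ℕ} (hx : x ∈ s.level (m + 1))
    (hm : ¬connectedComponentIn (s.level m) x ⊆ Ioo β γ)
    (hm1 : connectedComponentIn (s.level (m + 1)) x ⊆ Ioo β γ) :
    (s.a m ≤ β ∧ β < s.f m ∧ s.b m < γ) ∨ (β < s.a m ∧ s.e m < γ ∧ γ ≤ s.b m) := by
  have hsplit : ¬connectedComponentIn (s.level m) x ⊆ s.level (m + 1) := fun h =>
    hm ((isPreconnected_connectedComponentIn.subset_connectedComponentIn
      (mem_connectedComponentIn (s.subset_succ m hx)) h).trans hm1)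
  have hcomp := s.connectedComponentIn_level_eq_Icc hsplit
  have hxab : x ∈ Icc (s.a m) (s.b m) := hcomp ▸ mem_connectedComponentIn (s.subset_succ m hx)
  rw [hcomp] at hm
  rcases le_or_gt (s.f m) x with hfx | hxf
  · have hright : Icc (s.f m) (s.b m) ⊆ Ioo β γ := (isPreconnected_Icc.subset_connectedComponentIn
      ⟨hfx, hxab.2⟩ (s.Icc_right_subset_level_succ m)).trans hm1
    have hb : s.b m < γ := (hright ⟨s.f_le_b m, le_rfl⟩).2
    refine .inl ⟨?_, (hright ⟨le_rfl, s.f_le_b m⟩).1, hb⟩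
    by_contra! ha
    exact hm fun y hy => ⟨ha.trans_le hy.1, hy.2.trans_lt hb⟩
  · have hxe : x ≤ s.e m :=
      not_lt.1 fun hex => (s.disjoint_Ioo_level_succ m).ne_of_mem ⟨hex, hxf⟩ hx rfl
    have hleft : Icc (s.a m) (s.e m) ⊆ Ioo β γ := (isPreconnected_Icc.subset_connectedComponentIn
      ⟨hxab.1, hxe⟩ (s.Icc_left_subset_level_succ m)).trans hm1
    have ha : β < s.a m := (hleft ⟨le_rfl, s.a_le_e m⟩).1
    refine .inr ⟨ha, (hleft ⟨s.a_le_e m, le_rfl⟩).2, ?_⟩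
    by_contra! hb
    exact hm fun y hy => ⟨ha.trans_le hy.1, hy.2.trans_lt hb⟩

end SlowSubdivision

theorem SizeCond.symm {ε : ℝ} {K F : Set ℝ} (h : SizeCond ε K F) : SizeCond ε F K :=
  And.symm h

theorem SizeCond.gap_le {ε : ℝ} {K F : Set ℝ} (h : SizeCond ε K F) (s : SlowSubdivision K)
    (n : ℕ) : s.f n - s.e n ≤ (1 - ε) * (sSup F - sInf F) := by
  simpa only [csSup_Ioo (s.e_lt_f n), csInf_Ioo (s.e_lt_f n)] using h.1 _ (s.isHole_Ioo n)

namespace StableGapCond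

variable {ε : ℝ} {C : Set ℝ} {s : SlowSubdivision C}

theorem one_sub_pos (hs : StableGapCond ε s) : 0 < 1 - ε := by
  by_contra! h
  nlinarith [(hs 0).1, s.e_lt_f 0, s.a_le_e 0]

protected theorem neg (hs : StableGapCond ε s) : StableGapCond ε s.neg := fun n => by
  simp only [SlowSubdivision.neg, neg_sub_neg]
  exact (hs n).symm

/-- If the component split at stage `m` reaches left of `β` and its right piece lies in `(β, γ)`,
then the hole opened is short, so the left piece covers `α`; the hole that later removes `α`
would need a right neighbour longer than `γ - β`. -/
theorem level_inter_Icc_nonempty_of_split (hs : StableGapCond ε s) (hε : 0 ≤ ε) {m N : ℕ}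
    {α β γ : ℝ} (hL : γ - β < (1 - ε) * (β - α))
    (ha : s.a m ≤ β) (hf : β < s.f m) (hb : s.b m < γ) :
    (s.level N ∩ Icc α β).Nonempty := by
  by_contra hempty
  have hout : ∀ x ∈ s.level N, x < α ∨ β < x := fun x hx => by
    by_contra! h
    exact hempty ⟨x, hx, h⟩
  have hpos := hs.one_sub_pos
  have hβγ : 0 < γ - β := by linarith [s.f_le_b m]
  have hαβ : 0 < β - α := pos_of_mul_pos_right (hβγ.trans hL) hpos.le
  have hshort : (1 - ε) * (γ - β) < β - α := calc
    (1 - ε) * (γ - β) < (1 - ε) * ((1 - ε) * (β - α)) := by gcongr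
    _ ≤ 1 * (1 * (β - α)) := by gcongr <;> linarith
    _ = β - α := by ring
  have hshort_m : s.f m - s.e m < β - α := calc
    s.f m - s.e m < (1 - ε) * (s.b m - s.f m) := (hs m).2
    _ ≤ (1 - ε) * (γ - β) := by gcongr
    _ < β - α := hshort
  have hαe : α < s.e m := by linarith
  have haα : s.a m < α := (hout _ (s.a_mem_level m N)).resolve_right (by linarith)
  have hαm : α ∈ s.level (m + 1) := s.Icc_left_subset_level_succ m ⟨haα.le, hαe.le⟩
  obtain ⟨k, hmk, -, hαk⟩ := s.exists_mem_Ioo_of_mem_level hαm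
    (fun h => hempty ⟨α, h, le_rfl, by linarith⟩)
  have hek : s.e k < α := hαk.1
  have hβf : β < s.f k := (hout _ (s.f_mem_level k N)).resolve_left (by linarith [hαk.2])
  have hbk : s.b k ≤ s.e m := by
    by_contra! h
    have hy : (s.e m + min (s.b k) (s.f m)) / 2 ∈ Ioo (s.e m) (s.f m) := by
      constructor <;> linarith [min_le_left (s.b k) (s.f m), min_le_right (s.b k) (s.f m),
        lt_min h (s.e_lt_f m)]
    refine (s.disjoint_Ioo_level_succ m).ne_of_mem hy (s.antitone_level hmk
      (s.Icc_subset_level k ⟨?_, ?_⟩)) rfl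
    · linarith [s.a_le_e k, lt_min h (s.e_lt_f m)]
    · linarith [min_le_left (s.b k) (s.f m), lt_min h (s.e_lt_f m)]
  have := calc
    β - α < s.f k - s.e k := by linarith
    _ < (1 - ε) * (s.b k - s.f k) := (hs k).2
    _ ≤ (1 - ε) * (γ - β) := by gcongr; linarith [s.e_lt_f m, s.f_le_b m]
    _ < β - α := hshort
  exact this.false

theorem level_inter_Icc_nonempty_of_split' (hs : StableGapCond ε s) (hε : 0 ≤ ε) {m N : ℕ}
    {β γ δ : ℝ} (hR : γ - β < (1 - ε) * (δ - γ))
    (ha : β < s.a m) (he : s.e m < γ) (hb : γ ≤ s.b m) :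
    (s.level N ∩ Icc γ δ).Nonempty := by
  obtain ⟨x, hx, hxI⟩ := hs.neg.level_inter_Icc_nonempty_of_split hε (N := N) (α := -δ) (β := -γ)
    (γ := -β) (by linarith) (neg_le_neg hb) (neg_lt_neg he) (neg_lt_neg ha)
  exact ⟨-x, hx, by linarith [hxI.2], by linarith [hxI.1]⟩

/-- A form of Newhouse's gap lemma. Follow the component of a point of `level N ∩ (β, γ)` back
until it first fits in `(β, γ)`: the stage where that happens splits a component reaching out of
the window, which `level_inter_Icc_nonempty_of_split` rules out on either side. -/
theorem disjoint_level_Ioo (hs : StableGapCond ε s) (hε : 0 ≤ ε) {N : ℕ} {α β γ δ : ℝ}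
    (hα : Disjoint (s.level N) (Icc α β)) (hδ : Disjoint (s.level N) (Icc γ δ))
    (hL : γ - β < (1 - ε) * (β - α)) (hR : γ - β < (1 - ε) * (δ - γ))
    (hC : γ - β ≤ (1 - ε) * (sSup C - sInf C)) :
    Disjoint (s.level N) (Ioo β γ) := by
  rw [disjoint_left]
  intro x hxN hx
  have hpos := hs.one_sub_pos
  let P : ℕ → Prop := fun m => connectedComponentIn (s.level m) x ⊆ Ioo β γ
  have hPN : P N := connectedComponentIn_subset_Ioo
    (fun h => hα.ne_of_mem h ⟨by nlinarith [hx.1, hx.2], le_rfl⟩ rfl)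
    (fun h => hδ.ne_of_mem h ⟨le_rfl, by nlinarith [hx.1, hx.2]⟩ rfl) hx
  have hP0 : ¬P 0 := fun h => by
    change connectedComponentIn (s.level 0) x ⊆ Ioo β γ at h
    have hx0 := s.antitone_level N.zero_le hxN
    rw [s.level_zero] at h hx0
    rw [isPreconnected_Icc.connectedComponentIn hx0] at h
    have h1 := h ⟨le_rfl, hx0.1.trans hx0.2⟩
    have h2 := h ⟨hx0.1.trans hx0.2, le_rfl⟩
    nlinarith [h1.1, h2.2, mul_nonneg hε (sub_nonneg.2 (hx0.1.trans hx0.2))]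
  obtain ⟨m, hmN, hm, hm1⟩ := exists_lt_not_and_succ hP0 hPN
  rcases s.split_cases_of_component_subset_Ioo (s.antitone_level hmN hxN) hm hm1 with
    ⟨ha, hf, hb⟩ | ⟨ha, he, hb⟩
  · obtain ⟨y, hyN, hy⟩ := hs.level_inter_Icc_nonempty_of_split hε (N := N) hL ha hf hb
    exact hα.ne_of_mem hyN hy rfl
  · obtain ⟨y, hyN, hy⟩ := hs.level_inter_Icc_nonempty_of_split' hε (N := N) hR ha he hb
    exact hδ.ne_of_mem hyN hy rfl


theorem add_level_subset_add_level_succ (hs : StableGapCond ε s) (hε : 0 ≤ ε) {F : Set ℝ}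
    {σ : SlowSubdivision F}
    (hσ : StableGapCond ε σ) (N M : ℕ) (hM : σ.f M - σ.e M ≤ (1 - ε) * (sSup C - sInf C)) :
    s.level N + σ.level M ⊆ s.level N + σ.level (M + 1) := by
  rintro _ ⟨x, hx, y, hy, rfl⟩
  by_contra hnot
  have hout : ∀ x' ∈ s.level N, x + y - x' ∉ σ.level (M + 1) := fun x' hx' h =>
    hnot ⟨x', hx', _, h, add_sub_cancel x' _⟩
  have hygap : y ∈ Ioo (σ.e M) (σ.f M) := by
    have hy' := hout x hx
    rw [add_sub_cancel_left, σ.level_succ] at hy'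
    by_contra h
    exact hy' ⟨hy, h⟩
  have hα : Disjoint (s.level N) (Icc (x + y - σ.b M) (x + y - σ.f M)) :=
    disjoint_left.2 fun x' hx' h => hout x' hx'
      (σ.Icc_right_subset_level_succ M ⟨by linarith [h.2], by linarith [h.1]⟩)
  have hδ : Disjoint (s.level N) (Icc (x + y - σ.e M) (x + y - σ.a M)) :=
    disjoint_left.2 fun x' hx' h => hout x' hx'
      (σ.Icc_left_subset_level_succ M ⟨by linarith [h.2], by linarith [h.1]⟩)
  refine (hs.disjoint_level_Ioo hε hα hδ ?_ ?_ ?_).ne_of_mem hx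
    ⟨by linarith [hygap.2], by linarith [hygap.1]⟩ rfl
  · simpa only [sub_sub_sub_cancel_left] using (hσ M).2
  · simpa only [sub_sub_sub_cancel_left] using (hσ M).1
  · simpa only [sub_sub_sub_cancel_left] using hM

theorem level_add_level_eq_Icc (hs : StableGapCond ε s) (hε : 0 ≤ ε) {F : Set ℝ}
    {σ : SlowSubdivision F} (hσ : StableGapCond ε σ) (hsize : SizeCond ε C F) (n : ℕ) :
    s.level n + σ.level n = Icc (sInf C + sInf F) (sSup C + sSup F) := by
  induction n with
  | zero => rw [s.level_zero, σ.level_zero, Icc_add_Icc s.sInf_le_sSup σ.sInf_le_sSup]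
  | succ n ih =>
    refine subset_antisymm (ih ▸ add_subset_add (s.subset_succ n) (σ.subset_succ n)) ?_
    calc Icc _ _ = s.level n + σ.level n := ih.symm
      _ ⊆ s.level n + σ.level (n + 1) :=
        hs.add_level_subset_add_level_succ hε hσ n n (hsize.symm.gap_le σ n)
      _ = σ.level (n + 1) + s.level n := add_comm _ _
      _ ⊆ σ.level (n + 1) + s.level (n + 1) :=
        hσ.add_level_subset_add_level_succ hε hs (n + 1) n (hsize.gap_le s n)
      _ = s.level (n + 1) + σ.level (n + 1) := add_comm _ _

end StableGapCond

theorem hall_sum_of_cantor_sets_general (ε : ℝ) (hε : 0 < ε) (K F : Set ℝ)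
    (hKgap : HasStableGap ε K) (hFgap : HasStableGap ε F)
    (hsize : SizeCond ε K F) :
    Set.image2 (fun x y => x + y) K F = Set.Icc (sInf K + sInf F) (sSup K + sSup F) := by
  obtain ⟨sK, hK⟩ := hKgap
  obtain ⟨sF, hF⟩ := hFgap
  have hlevel := hK.level_add_level_eq_Icc hε.le hF hsize
  rw [image2_add]
  refine subset_antisymm
    ((add_subset_add (sK.subset_level 0) (sF.subset_level 0)).trans (hlevel 0).le) ?_
  calc Icc _ _ = ⋂ n, (sK.level n + sF.level n) := by simp only [hlevel, iInter_const]
    _ ⊆ (⋂ n, sK.level n) + ⋂ n, sF.level n :=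
      iInter_add_subset_add_iInter sK.antitone_level sF.antitone_level sK.isCompact_level_zero
        sK.isClosed_level sF.isClosed_level
    _ = K + F := by rw [sK.iInter_level, sF.iInter_level]

/-- **Hall's theorem on sums of Cantor sets.** If the Cantor sets `𝕂` and `𝔽` each
satisfy the `ε`-stable gap condition and jointly the `ε`-size condition, then
`𝕂 + 𝔽 = [min 𝕂 + min 𝔽, max 𝕂 + max 𝔽]`. -/
theorem hall_sum_of_cantor_sets (ε : ℝ) (hε : 0 < ε) (K F : Set ℝ)
    (hK : IsCantorSet K) (hF : IsCantorSet F)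
    (hKgap : HasStableGap ε K) (hFgap : HasStableGap ε F)
    (hsize : SizeCond ε K F) :
    Set.image2 (fun x y => x + y) K F = Set.Icc (sInf K + sInf F) (sSup K + sSup F) :=
  hall_sum_of_cantor_sets_general ε hε K F hKgap hFgap hsize
end
end

section
/- Let ε > 0 and let 𝕂 be a Cantor set in ℝ. Let (𝕂(n))_{n∈ℕ} be a monotone slow subdivision of 𝕂 (i.e. a slow subdivision whose ordered holes B₀, B₁, B₂, … satisfy |B_{n+1}| ≤ |B_n| for all n). If 𝕂 admits some slow subdivision satisfying the ε-stable gap condition, then the monotone slow subdivision (𝕂(n))_{n∈ℕ} itself satisfies the ε-stable gap condition. -/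
/-!
Every hole `(e n, f n)` of `s` is a gap of `C`, hence also a hole of the subdivision `t`
with the `ε`-stable gap condition, say at stage `m`. The interval `[a n, e n]` to its left
starts either at `min C` or at the right end of an earlier, hence (by monotonicity) at
least as long, hole `k` of `s`, which `t` removes at some stage `m'`. Whichever of the two
holes `t` removes later lies in a component of `t` bounded by the other one, so the stable
gap inequality of `t` at that stage bounds `|B_n|` directly, or through `|B_k|`. The
right-hand inequality follows by reflecting everything through `x ↦ -x`.
-/

noncomputable section

open Set Filter Topology

theorem le_or_le_of_disjoint_Icc_Ioo {α : Type*} [LinearOrder α] [DenselyOrdered α]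
    {p q r s : α} (h : Disjoint (Icc p q) (Ioo r s)) (hpq : p ≤ q) (hrs : r < s) :
    q ≤ r ∨ s ≤ p := by
  by_contra! hlt
  obtain ⟨z, hrz, hz⟩ := exists_between (lt_min hlt.1 hrs)
  exact disjoint_left.1 h ⟨le_max_left p z, max_le hpq (hz.trans_le (min_le_left _ _)).le⟩
    ⟨hrz.trans_le (le_max_right _ _), max_lt hlt.2 (hz.trans_le (min_le_right _ _))⟩

namespace SlowSubdivision

variable {C : Set ℝ} (u : SlowSubdivision C)

theorem level_antitone : Antitone u.level :=
  antitone_nat_of_succ_le u.subset_succ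

theorem a_le_b_s8 (n : ℕ) : u.a n ≤ u.b n :=
  (u.a_le_e n).trans ((u.e_lt_f n).le.trans (u.f_le_b n))

theorem Icc_subset_level_s8 (n : ℕ) : Icc (u.a n) (u.b n) ⊆ u.level n := by
  rw [← u.component n]
  exact connectedComponentIn_subset _ _

theorem a_mem_Icc_sInf_sSup (n : ℕ) : u.a n ∈ Icc (sInf C) (sSup C) :=
  u.level_zero ▸ u.level_antitone (Nat.zero_le n) (u.Icc_subset_level_s8 n ⟨le_rfl, u.a_le_b_s8 n⟩)

theorem mem_level_iff {x : ℝ} {n : ℕ} :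
    x ∈ u.level n ↔ x ∈ u.level 0 ∧ ∀ k < n, x ∉ Ioo (u.e k) (u.f k) := by
  induction n with
  | zero => simp
  | succ n ih => rw [u.level_succ, Set.mem_sdiff, ih, and_assoc, Nat.forall_lt_succ_right]

theorem mem_iff {x : ℝ} : x ∈ C ↔ x ∈ u.level 0 ∧ ∀ k, x ∉ Ioo (u.e k) (u.f k) := by
  have hC : x ∈ C ↔ ∀ n, x ∈ u.level n := by rw [← mem_iInter, u.iInter_level]
  rw [hC]
  exact ⟨fun h => ⟨h 0, fun k => (u.mem_level_iff.1 (h (k + 1))).2 k k.lt_succ_self⟩,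
    fun h _ => u.mem_level_iff.2 ⟨h.1, fun k _ => h.2 k⟩⟩

theorem disjoint_hole (k : ℕ) : Disjoint C (Ioo (u.e k) (u.f k)) :=
  disjoint_left.2 fun _ hx => (u.mem_iff.1 hx).2 k

theorem disjoint_Icc_hole {k m : ℕ} (h : k < m) :
    Disjoint (Icc (u.a m) (u.b m)) (Ioo (u.e k) (u.f k)) :=
  disjoint_left.2 fun _ hx => (u.mem_level_iff.1 (u.Icc_subset_level_s8 m hx)).2 k h

theorem b_le_e_or_f_le_a {k m : ℕ} (h : k < m) : u.b m ≤ u.e k ∨ u.f k ≤ u.a m :=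
  le_or_le_of_disjoint_Icc_Ioo (u.disjoint_Icc_hole h) (u.a_le_b_s8 m) (u.e_lt_f k)

theorem disjoint_Icc_e_f_hole {k n : ℕ} (h : k ≠ n) :
    Disjoint (Icc (u.e n) (u.f n)) (Ioo (u.e k) (u.f k)) := by
  refine disjoint_left.2 fun x ⟨hxe, hxf⟩ ⟨hkx, hxk⟩ => ?_
  have := u.a_le_e n; have := u.f_le_b n; have := u.a_le_e k; have := u.f_le_b k
  rcases h.lt_or_gt with h | h
  · rcases u.b_le_e_or_f_le_a h with h' | h' <;> linarith
  · rcases u.b_le_e_or_f_le_a h with h' | h' <;> linarith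

theorem mem_of_mem_Icc_of_notMem_hole {n : ℕ} {x : ℝ} (hx : x ∈ Icc (u.e n) (u.f n))
    (hxn : x ∉ Ioo (u.e n) (u.f n)) : x ∈ C := by
  refine u.mem_iff.2 ⟨u.level_antitone (Nat.zero_le n) (u.Icc_subset_level_s8 n ?_), fun k => ?_⟩
  · exact ⟨(u.a_le_e n).trans hx.1, hx.2.trans (u.f_le_b n)⟩
  · rcases eq_or_ne k n with rfl | hk
    · exact hxn
    · exact disjoint_left.1 (u.disjoint_Icc_e_f_hole hk) hx

theorem e_mem (n : ℕ) : u.e n ∈ C :=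
  u.mem_of_mem_Icc_of_notMem_hole ⟨le_rfl, (u.e_lt_f n).le⟩ fun h => lt_irrefl _ h.1

theorem f_mem (n : ℕ) : u.f n ∈ C :=
  u.mem_of_mem_Icc_of_notMem_hole ⟨(u.e_lt_f n).le, le_rfl⟩ fun h => lt_irrefl _ h.2

theorem exists_eq_hole {x y : ℝ} (hx : x ∈ C) (hy : y ∈ C) (hxy : x < y)
    (hgap : Disjoint C (Ioo x y)) : ∃ m, u.e m = x ∧ u.f m = y := by
  obtain ⟨c, hxc, hcy⟩ := exists_between hxy
  have hc : c ∈ u.level 0 := by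
    have hx0 := (u.mem_iff.1 hx).1
    have hy0 := (u.mem_iff.1 hy).1
    rw [u.level_zero] at hx0 hy0 ⊢
    exact ordConnected_Icc.out hx0 hy0 ⟨hxc.le, hcy.le⟩
  obtain ⟨m, hm⟩ : ∃ m, c ∈ Ioo (u.e m) (u.f m) := by
    by_contra! h
    exact disjoint_left.1 hgap (u.mem_iff.2 ⟨hc, h⟩) ⟨hxc, hcy⟩
  have hC (z : ℝ) (hz : z ∈ C) : z ∉ Ioo (u.e m) (u.f m) := (u.mem_iff.1 hz).2 m
  refine ⟨m, le_antisymm ?_ ?_, le_antisymm ?_ ?_⟩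
  · exact not_lt.1 fun h => disjoint_left.1 hgap (u.e_mem m) ⟨h, hm.1.trans hcy⟩
  · exact not_lt.1 fun h => hC x hx ⟨h, hxc.trans hm.2⟩
  · exact not_lt.1 fun h => hC y hy ⟨hm.1.trans hcy, h⟩
  · exact not_lt.1 fun h => disjoint_left.1 hgap (u.f_mem m) ⟨hxc.trans hm.2, h⟩

theorem exists_f_mem_Ioc {n : ℕ} {x : ℝ} (hx : sInf C ≤ x) (hxa : x < u.a n) :
    ∃ k < n, u.f k ∈ Ioc x (u.a n) := by
  have ha : u.a n ∈ u.level n := u.Icc_subset_level_s8 n ⟨le_rfl, u.a_le_b_s8 n⟩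
  have hnot : ¬ Icc x (u.a n) ⊆ u.level n := fun hsub => by
    have := isPreconnected_Icc.subset_connectedComponentIn (right_mem_Icc.2 hxa.le) hsub
    rw [u.component n] at this
    exact hxa.not_ge (this (left_mem_Icc.2 hxa.le)).1
  obtain ⟨y, hy, hyn⟩ := not_subset.1 hnot
  have hy0 : y ∈ u.level 0 := by
    rw [u.level_zero]
    exact ⟨hx.trans hy.1, hy.2.trans (u.a_mem_Icc_sInf_sSup n).2⟩
  obtain ⟨k, hk, hyk⟩ : ∃ k < n, y ∈ Ioo (u.e k) (u.f k) := by
    by_contra! h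
    exact hyn (u.mem_level_iff.2 ⟨hy0, h⟩)
  refine ⟨k, hk, hy.1.trans_lt hyk.2, not_lt.1 fun h => ?_⟩
  exact (u.mem_level_iff.1 ha).2 k hk ⟨hyk.1.trans_le hy.2, h⟩

theorem a_eq_sInf_or_exists_f_eq (n : ℕ) : u.a n = sInf C ∨ ∃ k < n, u.f k = u.a n := by
  refine or_iff_not_imp_left.2 fun hne => ?_
  have hlt : sInf C < u.a n := (u.a_mem_Icc_sInf_sSup n).1.lt_of_ne' hne
  have hbelow : ∀ᶠ x in 𝓝[<] u.a n, ∀ k ∈ Finset.range n, u.f k < u.a n → u.f k < x := by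
    refine (Finset.range n).eventually_all.2 fun k _ => ?_
    by_cases hk : u.f k < u.a n
    · filter_upwards [Ioo_mem_nhdsLT hk] with x hx using fun _ => hx.1
    · exact Eventually.of_forall fun _ h => absurd h hk
  obtain ⟨x, hx, hxf⟩ :=
    ((eventually_of_mem (Ioo_mem_nhdsLT hlt) fun _ h => h).and hbelow).exists
  obtain ⟨k, hk, hkx, hka⟩ := u.exists_f_mem_Ioc hx.1.le hx.2
  exact ⟨k, hk, hka.eq_of_not_lt fun h => (hxf k (Finset.mem_range.2 hk) h).not_gt hkx⟩

theorem connectedComponentIn_b (n : ℕ) :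
    connectedComponentIn (u.level n) (u.b n) = Icc (u.a n) (u.b n) := by
  rw [← connectedComponentIn_eq (by rw [u.component n]; exact ⟨u.a_le_b_s8 n, le_rfl⟩), u.component n]

@[simps]
def reflect : SlowSubdivision (-C) where
  level n := -u.level n
  subset_succ n := neg_subset_neg.2 (u.subset_succ n)
  level_zero := by rw [u.level_zero, neg_Icc, Real.sInf_neg, Real.sSup_neg]
  pieces n := by
    obtain ⟨I, hle, hdisj, hI⟩ := u.pieces n
    refine ⟨fun i => (-(I i).2, -(I i).1), fun i => neg_le_neg (hle i), fun i j hij => ?_, ?_⟩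
    · rw [← neg_Icc, ← neg_Icc]
      exact (hdisj i j hij).preimage Neg.neg
    · simp only [hI, iUnion_neg, neg_Icc]
  a n := -u.b n
  e n := -u.f n
  f n := -u.e n
  b n := -u.a n
  a_le_e n := neg_le_neg (u.f_le_b n)
  e_lt_f n := neg_lt_neg (u.e_lt_f n)
  f_le_b n := neg_le_neg (u.a_le_e n)
  component n := by
    rw [← image_neg_eq_neg, ← neg_Icc, ← image_neg_eq_neg, ← u.connectedComponentIn_b n]
    exact ((Homeomorph.neg ℝ).image_connectedComponentIn
      (u.Icc_subset_level_s8 n ⟨u.a_le_b_s8 n, le_rfl⟩)).symm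
  level_succ n := by rw [u.level_succ, ← neg_Ioo]; rfl
  iInter_level := by rw [← iInter_neg, u.iInter_level]

theorem stableGapCond_reflect_iff {ε : ℝ} : StableGapCond ε u.reflect ↔ StableGapCond ε u := by
  simp only [StableGapCond, reflect_a, reflect_e, reflect_f, reflect_b, neg_sub_neg]
  exact forall_congr' fun _ => and_comm

end SlowSubdivision

theorem StableGapCond.one_sub_pos_s8 {ε : ℝ} {C : Set ℝ} {t : SlowSubdivision C}
    (ht : StableGapCond ε t) : 0 < 1 - ε :=
  pos_of_mul_pos_left ((sub_pos.2 (t.e_lt_f 0)).trans (ht 0).1) (sub_nonneg.2 (t.a_le_e 0))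

section Comparison

variable {ε : ℝ} {C : Set ℝ} {s t : SlowSubdivision C}

theorem StableGapCond.left_of_antitone (ht : StableGapCond ε t)
    (hs : Antitone fun n => s.f n - s.e n) (n : ℕ) :
    s.f n - s.e n < (1 - ε) * (s.e n - s.a n) := by
  have hε := ht.one_sub_pos_s8.le
  obtain ⟨m, hme, hmf⟩ :=
    t.exists_eq_hole (s.e_mem n) (s.f_mem n) (s.e_lt_f n) (s.disjoint_hole n)
  have of_le_a (h : s.a n ≤ t.a m) : s.f n - s.e n < (1 - ε) * (s.e n - s.a n) :=
    calc s.f n - s.e n = t.f m - t.e m := by rw [hme, hmf]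
      _ < (1 - ε) * (t.e m - t.a m) := (ht m).1
      _ ≤ (1 - ε) * (s.e n - s.a n) := by rw [hme]; gcongr
  obtain ha | ⟨k, hk, hka⟩ := s.a_eq_sInf_or_exists_f_eq n
  · exact of_le_a (ha ▸ (t.a_mem_Icc_sInf_sSup m).1)
  obtain ⟨m', hm'e, hm'f⟩ :=
    t.exists_eq_hole (s.e_mem k) (s.f_mem k) (s.e_lt_f k) (s.disjoint_hole k)
  have := s.a_le_e n; have := s.e_lt_f n; have := t.a_le_e m'; have := t.e_lt_f m'
  have := t.e_lt_f m; have := t.f_le_b m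
  rcases lt_trichotomy m m' with h | rfl | h
  · obtain hb | hf := t.b_le_e_or_f_le_a h
    · calc s.f n - s.e n ≤ s.f k - s.e k := hs hk.le
        _ = t.f m' - t.e m' := by rw [hm'e, hm'f]
        _ < (1 - ε) * (t.b m' - t.f m') := (ht m').2
        _ ≤ (1 - ε) * (s.e n - s.a n) := by gcongr <;> linarith
    · linarith
  · linarith
  · obtain hb | hf := t.b_le_e_or_f_le_a h
    · linarith
    · exact of_le_a (hka ▸ hm'f ▸ hf)

theorem StableGapCond.right_of_antitone (ht : StableGapCond ε t)
    (hs : Antitone fun n => s.f n - s.e n) (n : ℕ) :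
    s.f n - s.e n < (1 - ε) * (s.b n - s.f n) := by
  have hs' : Antitone fun n => s.reflect.f n - s.reflect.e n := by
    simpa only [SlowSubdivision.reflect_f, SlowSubdivision.reflect_e, neg_sub_neg] using hs
  simpa only [SlowSubdivision.reflect_f, SlowSubdivision.reflect_e, SlowSubdivision.reflect_a,
    neg_sub_neg] using (t.stableGapCond_reflect_iff.2 ht).left_of_antitone hs' n

end Comparison

theorem monotone_slow_subdivision_stable_gap_general (ε : ℝ)
    (C : Set ℝ)
    (s : SlowSubdivision C)
    (hmono : ∀ n, s.f (n + 1) - s.e (n + 1) ≤ s.f n - s.e n)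
    (h : HasStableGap ε C) :
    StableGapCond ε s := by
  obtain ⟨t, ht⟩ := h
  have hs : Antitone fun n => s.f n - s.e n := antitone_nat_of_succ_le hmono
  exact fun n => ⟨ht.left_of_antitone hs n, ht.right_of_antitone hs n⟩

/-- If a Cantor set admits some slow subdivision satisfying the `ε`-stable gap
condition, then any monotone slow subdivision of it (one whose ordered holes have
non-increasing lengths) satisfies the `ε`-stable gap condition as well. -/
theorem monotone_slow_subdivision_stable_gap (ε : ℝ) (hε : 0 < ε)
    (C : Set ℝ) (hC : IsCantorSet C)
    (s : SlowSubdivision C)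
    (hmono : ∀ n, s.f (n + 1) - s.e (n + 1) ≤ s.f n - s.e n)
    (h : HasStableGap ε C) :
    StableGapCond ε s :=
  monotone_slow_subdivision_stable_gap_general ε C s hmono h
end
end
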